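/- arXiv:2405.19938 — 2 statements merged into one kernel-verified Lean document; each statement's English description precedes it below -/
import Mathlib

section
/- Let n ≥ 1 and let Ξ ∈ Sp(2n,ℝ) be written in n×n blocks as Ξ = [[Ξ₁₁, Ξ₁₂], [Ξ₂₁, Ξ₂₂]]. Then Ξ is of the form Ξ_{A,B,C} for some real symmetric n×n matrices A, C and some invertible real n×n matrix B if and only if the block Ξ₁₁ is invertible. -/
open Matrix

noncomputable section

/-- The standard symplectic form matrix `σ = [[0, I], [-I, 0]]`. -/
def sigmaMat (n : ℕ) : Matrix (Fin n ⊕ Fin n) (Fin n ⊕ Fin n) ℝ :=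
  Matrix.fromBlocks 0 1 (-1) 0

/-- Membership in the symplectic group: `Sᵀ σ S = σ`. -/
def IsSymplectic {n : ℕ} (S : Matrix (Fin n ⊕ Fin n) (Fin n ⊕ Fin n) ℝ) : Prop :=
  Sᵀ * sigmaMat n * S = sigmaMat n

/-- The symplectic matrix `Ξ_{A,B,C} = [[B⁻¹, -B⁻¹C], [AB⁻¹, Bᵀ - AB⁻¹C]]`. -/
def Xi {n : ℕ} (A B C : Matrix (Fin n) (Fin n) ℝ) :
    Matrix (Fin n ⊕ Fin n) (Fin n ⊕ Fin n) ℝ :=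
  Matrix.fromBlocks B⁻¹ (-(B⁻¹ * C)) (A * B⁻¹) (Bᵀ - A * B⁻¹ * C)

lemma sigma_sq (n : ℕ) : sigmaMat n * sigmaMat n = -1 := by
  simp only [sigmaMat, Matrix.fromBlocks_multiply]
  rw [← Matrix.fromBlocks_one, Matrix.fromBlocks_neg]
  congr 1 <;> simp

lemma symplectic_right {n : ℕ} {Ξ : Matrix (Fin n ⊕ Fin n) (Fin n ⊕ Fin n) ℝ}
    (hΞ : IsSymplectic Ξ) : Ξ * sigmaMat n * Ξᵀ = sigmaMat n := by
  have h1 : (-(sigmaMat n) * Ξᵀ * sigmaMat n) * Ξ = 1 := by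
    have := hΞ
    unfold IsSymplectic at this
    calc (-(sigmaMat n) * Ξᵀ * sigmaMat n) * Ξ
        = -(sigmaMat n) * (Ξᵀ * sigmaMat n * Ξ) := by noncomm_ring
      _ = -(sigmaMat n) * sigmaMat n := by rw [this]
      _ = 1 := by rw [neg_mul, sigma_sq]; simp
  have h2 : Ξ * (-(sigmaMat n) * Ξᵀ * sigmaMat n) = 1 := mul_eq_one_comm.mpr h1
  have h3 : Ξ * (-(sigmaMat n) * Ξᵀ * sigmaMat n) * (-(sigmaMat n)) = -(sigmaMat n) := by
    rw [h2, one_mul]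
  have h4 : -(Ξ * sigmaMat n * Ξᵀ) = -(sigmaMat n) := by
    calc -(Ξ * sigmaMat n * Ξᵀ)
        = Ξ * sigmaMat n * Ξᵀ * (-1) := by noncomm_ring
      _ = Ξ * sigmaMat n * Ξᵀ * (sigmaMat n * sigmaMat n) := by rw [sigma_sq]
      _ = Ξ * (-(sigmaMat n) * Ξᵀ * sigmaMat n) * (-(sigmaMat n)) := by noncomm_ring
      _ = -(sigmaMat n) := h3
  exact neg_injective h4

/-- A symplectic matrix is of the form `Ξ_{A,B,C}` iff its upper-left block is invertible. -/
theorem isSymplectic_eq_Xi_iff {n : ℕ} (hn : 1 ≤ n)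
    (Ξ : Matrix (Fin n ⊕ Fin n) (Fin n ⊕ Fin n) ℝ) (hΞ : IsSymplectic Ξ) :
    (∃ A B C : Matrix (Fin n) (Fin n) ℝ,
        A.IsSymm ∧ C.IsSymm ∧ IsUnit B.det ∧ Ξ = Xi A B C) ↔
      IsUnit (Ξ.toBlocks₁₁).det := by
  constructor
  · rintro ⟨A, B, C, hA, hC, hB, rfl⟩
    simpa [Xi, Matrix.toBlocks_fromBlocks₁₁] using Matrix.isUnit_nonsing_inv_det B hB
  · intro hP
    set P := Ξ.toBlocks₁₁ with hPdef
    set Q := Ξ.toBlocks₁₂ with hQdef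
    set R := Ξ.toBlocks₂₁ with hRdef
    set S := Ξ.toBlocks₂₂ with hSdef
    have hΞeq : Ξ = Matrix.fromBlocks P Q R S := (Matrix.fromBlocks_toBlocks Ξ).symm
    -- extract the block equations from the symplectic conditions
    have hL := hΞ
    rw [IsSymplectic, hΞeq, sigmaMat, Matrix.fromBlocks_transpose,
      Matrix.fromBlocks_multiply, Matrix.fromBlocks_multiply,
      Matrix.fromBlocks_inj] at hL
    obtain ⟨e1, e2, _, _⟩ := hL
    have hR := symplectic_right hΞ
    rw [hΞeq, sigmaMat, Matrix.fromBlocks_transpose,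
      Matrix.fromBlocks_multiply, Matrix.fromBlocks_multiply,
      Matrix.fromBlocks_inj] at hR
    obtain ⟨f1, _, _, _⟩ := hR
    -- simplify the equations
    have e1' : Pᵀ * R = Rᵀ * P := by
      have := e1; simp only [Matrix.mul_zero, Matrix.mul_one, Matrix.mul_neg,
        zero_add, add_zero] at this
      linear_combination (norm := noncomm_ring) this
    have e2' : Pᵀ * S - Rᵀ * Q = 1 := by
      have := e2; simp only [Matrix.mul_zero, Matrix.mul_one, Matrix.mul_neg,
        zero_add, add_zero] at this
      linear_combination (norm := noncomm_ring) this
    have f1' : P * Qᵀ = Q * Pᵀ := by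
      have := f1; simp only [Matrix.mul_zero, Matrix.mul_one, Matrix.mul_neg,
        zero_add, add_zero] at this
      linear_combination (norm := noncomm_ring) this
    have hPT : IsUnit Pᵀ.det := by rwa [Matrix.det_transpose]
    have hPinv : P⁻¹ * P = 1 := Matrix.nonsing_inv_mul P hP
    have hPinv' : P * P⁻¹ = 1 := Matrix.mul_nonsing_inv P hP
    have hPTinv : Pᵀ⁻¹ * Pᵀ = 1 := Matrix.nonsing_inv_mul Pᵀ hPT
    have hPTinv' : Pᵀ * Pᵀ⁻¹ = 1 := Matrix.mul_nonsing_inv Pᵀ hPT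
    -- key symmetry facts
    have keyA : Pᵀ⁻¹ * Rᵀ = R * P⁻¹ := by
      calc Pᵀ⁻¹ * Rᵀ = Pᵀ⁻¹ * (Rᵀ * (P * P⁻¹)) := by rw [hPinv', Matrix.mul_one]
        _ = Pᵀ⁻¹ * ((Rᵀ * P) * P⁻¹) := by rw [Matrix.mul_assoc]
        _ = Pᵀ⁻¹ * ((Pᵀ * R) * P⁻¹) := by rw [e1']
        _ = (Pᵀ⁻¹ * Pᵀ) * (R * P⁻¹) := by simp only [Matrix.mul_assoc]
        _ = R * P⁻¹ := by rw [hPTinv, Matrix.one_mul]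
    have keyC : Qᵀ * Pᵀ⁻¹ = P⁻¹ * Q := by
      calc Qᵀ * Pᵀ⁻¹ = (P⁻¹ * P) * (Qᵀ * Pᵀ⁻¹) := by rw [hPinv, Matrix.one_mul]
        _ = P⁻¹ * ((P * Qᵀ) * Pᵀ⁻¹) := by simp only [Matrix.mul_assoc]
        _ = P⁻¹ * ((Q * Pᵀ) * Pᵀ⁻¹) := by rw [f1']
        _ = P⁻¹ * (Q * (Pᵀ * Pᵀ⁻¹)) := by simp only [Matrix.mul_assoc]
        _ = P⁻¹ * Q := by rw [hPTinv', Matrix.mul_one]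
    refine ⟨R * P⁻¹, P⁻¹, -(P⁻¹ * Q), ?_, ?_, Matrix.isUnit_nonsing_inv_det P hP, ?_⟩
    · rw [Matrix.IsSymm, Matrix.transpose_mul, Matrix.transpose_nonsing_inv, keyA]
    · rw [Matrix.IsSymm, Matrix.transpose_neg, Matrix.transpose_mul,
        Matrix.transpose_nonsing_inv, keyC]
    · have hBB : P⁻¹⁻¹ = P := Matrix.nonsing_inv_nonsing_inv P hP
      have hBT : P⁻¹ᵀ = Pᵀ⁻¹ := Matrix.transpose_nonsing_inv P
      rw [Xi, hBB, hΞeq, Matrix.fromBlocks_inj]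
      refine ⟨rfl, ?_, ?_, ?_⟩
      · rw [Matrix.mul_neg, ← Matrix.mul_assoc, hPinv', Matrix.one_mul, neg_neg]
      · rw [Matrix.mul_assoc, hPinv, Matrix.mul_one]
      · rw [hBT]
        have : S = Pᵀ⁻¹ * (Pᵀ * S) := by rw [← Matrix.mul_assoc, hPTinv, Matrix.one_mul]
        rw [this]
        have hPS : Pᵀ * S = 1 + Rᵀ * Q := by linear_combination (norm := noncomm_ring) e2'
        rw [hPS, Matrix.mul_add, Matrix.mul_one, ← Matrix.mul_assoc, keyA]
        rw [Matrix.mul_assoc (R * P⁻¹) P, Matrix.mul_neg, ← Matrix.mul_assoc P,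
          hPinv', Matrix.one_mul, Matrix.mul_neg]
        noncomm_ring

end
end

section
/- Let n ≥ 1, let A and C be real symmetric n×n matrices and let B be an invertible real n×n matrix. The operator defined on Schwartz functions v on ℝⁿ by (M v)(x) = |det B|^{1/2} ∫_{ℝⁿ} e^{iπ(⟨Ax,x⟩ + 2⟨Bx,η⟩ + ⟨Cη,η⟩)} v̂(η) dη extends to a unitary operator on L²(ℝⁿ) and is an automorphism of the Schwartz space 𝒮(ℝⁿ). -/
open MeasureTheory Matrix

noncomputable section

/-- The Fourier transform `v̂(η) = ∫ e^{-2πi x·η} v(x) dx`. -/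
def ft {n : ℕ} (v : (Fin n → ℝ) → ℂ) : (Fin n → ℝ) → ℂ :=
  fun η => ∫ x : Fin n → ℝ,
    Complex.exp (-(2 * (Real.pi : ℂ) * Complex.I) * ((x ⬝ᵥ η : ℝ) : ℂ)) * v x

/-- The metaplectic generator
`(Mv)(x) = |det B|^{1/2} ∫ e^{iπ(⟨Ax,x⟩ + 2⟨Bx,η⟩ + ⟨Cη,η⟩)} v̂(η) dη`. -/
def Mabc {n : ℕ} (A B C : Matrix (Fin n) (Fin n) ℝ) (v : (Fin n → ℝ) → ℂ) :
    (Fin n → ℝ) → ℂ :=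
  fun x => (Real.sqrt |B.det| : ℂ) *
    ∫ η : Fin n → ℝ,
      Complex.exp (Complex.I * (Real.pi : ℂ) *
        ((A.mulVec x ⬝ᵥ x + 2 * (B.mulVec x ⬝ᵥ η) + C.mulVec η ⬝ᵥ η : ℝ) : ℂ)) * ft v η

open Complex SchwartzMap
open scoped FourierTransform RealInnerProductSpace ComplexConjugate

namespace MabcProof

variable {E' : Type*} [NormedAddCommGroup E'] [NormedSpace ℝ E']

lemma temperate_of_unit_fderiv {g : E' → ℂ} {Φ : E' → E' →L[ℝ] ℂ}
    (hg : ContDiff ℝ (⊤:ℕ∞) g) (hb : ∀ x, ‖g x‖ ≤ 1)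
    (hΦ : Function.HasTemperateGrowth Φ)
    (hfd : fderiv ℝ g = fun x => g x • Φ x) :
    Function.HasTemperateGrowth g := by
  refine ⟨hg, ?_⟩
  suffices key : ∀ N : ℕ, ∃ (k : ℕ) (C : ℝ), 0 ≤ C ∧ ∀ m ≤ N, ∀ x,
      ‖iteratedFDeriv ℝ m g x‖ ≤ C * (1 + ‖x‖) ^ k by
    intro N
    obtain ⟨k, C, _, h⟩ := key N
    exact ⟨k, C, h N le_rfl⟩
  intro N
  induction N with
  | zero =>
    refine ⟨0, 1, zero_le_one, ?_⟩
    intro m hm x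
    interval_cases m
    simpa [norm_iteratedFDeriv_zero] using hb x
  | succ N ih =>
    obtain ⟨k, C, hC, hbound⟩ := ih
    obtain ⟨l, D, hD, hgrowth⟩ := hΦ.norm_iteratedFDeriv_le_uniform N
    refine ⟨k + l, max C (2 ^ N * (C * D)), le_max_of_le_left hC, ?_⟩
    intro m hm x
    have hx1 : (1:ℝ) ≤ 1 + ‖x‖ := by simp [norm_nonneg]
    have hpow : (1 + ‖x‖) ^ k ≤ (1 + ‖x‖) ^ (k + l) :=
      pow_le_pow_right₀ hx1 (Nat.le_add_right _ _)
    rcases Nat.lt_succ_iff_lt_or_eq.1 (Nat.lt_succ_of_le hm) with h | h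
    · calc ‖iteratedFDeriv ℝ m g x‖ ≤ C * (1 + ‖x‖) ^ k := hbound m (Nat.lt_succ_iff.mp h) x
        _ ≤ max C (2 ^ N * (C * D)) * (1 + ‖x‖) ^ (k + l) := by
            apply mul_le_mul (le_max_left _ _) hpow (by positivity) (le_trans hC (le_max_left _ _))
    · subst h
      have hgc : ContDiff ℝ (N : WithTop ℕ∞) g := hg.of_le (by exact_mod_cast le_top)
      have hΦc : ContDiff ℝ (N : WithTop ℕ∞) Φ := hΦ.1.of_le (by exact_mod_cast le_top)
      calc ‖iteratedFDeriv ℝ (N + 1) g x‖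
          = ‖iteratedFDeriv ℝ N (fderiv ℝ g) x‖ := (norm_iteratedFDeriv_fderiv).symm
        _ = ‖iteratedFDeriv ℝ N (fun y => g y • Φ y) x‖ := by rw [hfd]
        _ ≤ ∑ i ∈ Finset.range (N + 1), (N.choose i : ℝ) * ‖iteratedFDeriv ℝ i g x‖ *
              ‖iteratedFDeriv ℝ (N - i) Φ x‖ :=
            norm_iteratedFDeriv_smul_le hgc hΦc x le_rfl
        _ ≤ ∑ i ∈ Finset.range (N + 1), (N.choose i : ℝ) *
              ((C * (1 + ‖x‖) ^ k) * (D * (1 + ‖x‖) ^ l)) := by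
            apply Finset.sum_le_sum
            intro i hi
            rw [mul_assoc]
            have h1 := hbound i (Nat.lt_succ_iff.mp (Finset.mem_range.1 hi)) x
            have h2 := hgrowth (N - i) (Nat.sub_le _ _) x
            have hn1 : (0:ℝ) ≤ (N.choose i : ℝ) := by positivity
            apply mul_le_mul_of_nonneg_left _ hn1
            exact mul_le_mul h1 h2 (norm_nonneg _) (by positivity)
        _ = 2 ^ N * ((C * (1 + ‖x‖) ^ k) * (D * (1 + ‖x‖) ^ l)) := by
            rw [← Finset.sum_mul]
            norm_cast
            rw [Nat.sum_range_choose]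
        _ = (2 ^ N * (C * D)) * (1 + ‖x‖) ^ (k + l) := by rw [pow_add]; ring
        _ ≤ max C (2 ^ N * (C * D)) * (1 + ‖x‖) ^ (k + l) :=
            mul_le_mul_of_nonneg_right (le_max_right _ _) (by positivity)

lemma hasTemperateGrowth_gaussPhase (b : E' →L[ℝ] E' →L[ℝ] ℝ) (c : ℝ) :
    Function.HasTemperateGrowth (fun x => Complex.exp (Complex.I * c * (b x x : ℝ))) := by
  set γ : ℂ := Complex.I * c with hγ
  have hγre : γ.re = 0 := by simp [hγ]
  set Ψ : E' →L[ℝ] (E' →L[ℝ] ℂ) :=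
    γ • ((ContinuousLinearMap.compL ℝ E' ℝ ℂ Complex.ofRealCLM).comp (b + b.flip)) with hΨ
  have hq : ContDiff ℝ (⊤:ℕ∞) (fun x => b x x) :=
    b.isBoundedBilinearMap.contDiff.comp (contDiff_id.prodMk contDiff_id)
  have hqd : ∀ x : E', HasFDerivAt (fun y => b y y) (b x + b.flip x) x := by
    intro x
    have h1 := (b.hasFDerivAt (x := x)).clm_apply (hasFDerivAt_id x)
    simpa using h1
  have hg : ContDiff ℝ (⊤:ℕ∞) (fun x => Complex.exp (γ * (b x x : ℝ))) := by
    apply Complex.contDiff_exp.comp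
    exact contDiff_const.mul (Complex.ofRealCLM.contDiff.comp hq)
  have hd : ∀ x : E', HasFDerivAt (fun y => Complex.exp (γ * (b y y : ℝ)))
      (Complex.exp (γ * (b x x : ℝ)) • (Ψ x)) x := by
    intro x
    have h2 : HasFDerivAt (fun y : E' => ((b y y : ℝ) : ℂ))
        (Complex.ofRealCLM.comp (b x + b.flip x)) x :=
      Complex.ofRealCLM.hasFDerivAt.comp x (hqd x)
    have h3 : HasFDerivAt (fun y : E' => γ * ((b y y : ℝ) : ℂ))
        (γ • (Complex.ofRealCLM.comp (b x + b.flip x))) x := h2.const_mul γ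
    have h4 := h3.cexp
    convert h4 using 2
    rfl
  apply temperate_of_unit_fderiv hg
  · intro x
    simp only [Complex.norm_exp]
    have : (γ * (b x x : ℝ)).re = 0 := by
      simp [Complex.mul_re, hγre, hγ]
    rw [this, Real.exp_zero]
  · exact Ψ.hasTemperateGrowth
  · funext x
    exact (hd x).fderiv


variable {n : ℕ}

abbrev P (n : ℕ) := Fin n → ℝ
abbrev Eu (n : ℕ) := EuclideanSpace ℝ (Fin n)

def eL : P n ≃L[ℝ] Eu n := (PiLp.continuousLinearEquiv 2 ℝ fun _ : Fin n => ℝ).symm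

lemma eL_apply (x : P n) (i : Fin n) : eL x i = x i := rfl
lemma eL_symm_apply (y : Eu n) (i : Fin n) : eL.symm y i = y i := rfl

/-- transfer of integrals between the pi type and the euclidean space -/
lemma integral_transfer {G : Type*} [NormedAddCommGroup G] [NormedSpace ℝ G]
    (g : P n → G) : ∫ y : Eu n, g (eL.symm y) = ∫ x : P n, g x := by
  have h := (EuclideanSpace.volume_preserving_symm_measurableEquiv_toLp (Fin n)).integral_comp
    (MeasurableEquiv.toLp 2 (Fin n → ℝ)).symm.measurableEmbedding g
  exact h

-- dot product as a bilinear CLM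
def dotCLM : P n →L[ℝ] P n →L[ℝ] ℝ :=
  LinearMap.mkContinuous₂
    (LinearMap.mk₂ ℝ (fun x y => x ⬝ᵥ y) add_dotProduct smul_dotProduct dotProduct_add
      dotProduct_smul) n
    (fun x y => by
      simp only [LinearMap.mk₂_apply]
      calc ‖x ⬝ᵥ y‖ ≤ ∑ i, ‖x i * y i‖ := norm_sum_le _ _
        _ ≤ ∑ _i : Fin n, ‖x‖ * ‖y‖ := by
            apply Finset.sum_le_sum
            intro i _
            rw [norm_mul]
            exact mul_le_mul (norm_le_pi_norm x i) (norm_le_pi_norm y i) (norm_nonneg _)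
              (norm_nonneg _)
        _ = n * ‖x‖ * ‖y‖ := by simp [mul_assoc])

lemma dotCLM_apply (x y : P n) : dotCLM x y = x ⬝ᵥ y := rfl

def matCLM (M : Matrix (Fin n) (Fin n) ℝ) : P n →L[ℝ] P n :=
  LinearMap.toContinuousLinearMap M.mulVecLin

def bmat (M : Matrix (Fin n) (Fin n) ℝ) : P n →L[ℝ] P n →L[ℝ] ℝ :=
  dotCLM.bilinearComp (matCLM M) (ContinuousLinearMap.id ℝ (P n))

lemma bmat_apply (M : Matrix (Fin n) (Fin n) ℝ) (x y : P n) :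
    bmat M x y = M.mulVec x ⬝ᵥ y := rfl

/-- the Gaussian phase function -/
def gauss (M : Matrix (Fin n) (Fin n) ℝ) : P n → ℂ :=
  fun x => Complex.exp (Complex.I * (Real.pi : ℂ) * ((M.mulVec x ⬝ᵥ x : ℝ) : ℂ))

lemma gauss_temperate (M : Matrix (Fin n) (Fin n) ℝ) :
    Function.HasTemperateGrowth (gauss M) :=
  hasTemperateGrowth_gaussPhase (bmat M) Real.pi

lemma gauss_norm (M : Matrix (Fin n) (Fin n) ℝ) (x : P n) : ‖gauss M x‖ = 1 := by
  simp only [gauss, Complex.norm_exp]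
  have : (Complex.I * (Real.pi : ℂ) * ((M.mulVec x ⬝ᵥ x : ℝ) : ℂ)).re = 0 := by
    simp [Complex.mul_re]
  rw [this, Real.exp_zero]

lemma gauss_mul_gauss_neg (M : Matrix (Fin n) (Fin n) ℝ) (x : P n) :
    gauss M x * gauss (-M) x = 1 := by
  rw [gauss, gauss, ← Complex.exp_add, Matrix.neg_mulVec, neg_dotProduct]
  have h : Complex.I * (Real.pi : ℂ) * ((M.mulVec x ⬝ᵥ x : ℝ) : ℂ)
      + Complex.I * (Real.pi : ℂ) * ((-(M.mulVec x ⬝ᵥ x) : ℝ) : ℂ) = 0 := by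
    push_cast
    ring
  rw [h, Complex.exp_zero]


/-- multiplication by a Gaussian phase, as a map of Schwartz spaces -/
def mulG (M : Matrix (Fin n) (Fin n) ℝ) : 𝓢(P n, ℂ) →L[ℝ] 𝓢(P n, ℂ) :=
  bilinLeftCLM (ContinuousLinearMap.mul ℝ ℂ) (gauss_temperate M)

lemma mulG_apply (M : Matrix (Fin n) (Fin n) ℝ) (f : 𝓢(P n, ℂ)) (x : P n) :
    mulG M f x = f x * gauss M x := rfl

def eqMulG (M : Matrix (Fin n) (Fin n) ℝ) : 𝓢(P n, ℂ) ≃ 𝓢(P n, ℂ) where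
  toFun := mulG M
  invFun := mulG (-M)
  left_inv f := by
    ext x
    rw [mulG_apply, mulG_apply, mul_assoc, gauss_mul_gauss_neg, mul_one]
  right_inv f := by
    ext x
    rw [mulG_apply, mulG_apply, mul_assoc]
    rw [mul_comm (gauss (-M) x), gauss_mul_gauss_neg, mul_one]

def eqScalar (c : ℂ) (hc : c ≠ 0) : 𝓢(P n, ℂ) ≃ 𝓢(P n, ℂ) where
  toFun f := c • f
  invFun f := c⁻¹ • f
  left_inv f := by ext x; simp [smul_smul, inv_mul_cancel₀ hc]
  right_inv f := by ext x; simp [smul_smul, mul_inv_cancel₀ hc]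

section BComp

variable (B : Matrix (Fin n) (Fin n) ℝ) (hB : IsUnit B.det)

def cleB : P n ≃L[ℝ] P n :=
  (B.toLinearEquiv' (B.invertibleOfIsUnitDet hB)).toContinuousLinearEquiv

lemma cleB_apply (x : P n) : cleB B hB x = B.mulVec x := rfl

def eqCompB : 𝓢(P n, ℂ) ≃ 𝓢(P n, ℂ) where
  toFun := compCLMOfContinuousLinearEquiv ℝ (cleB B hB)
  invFun := compCLMOfContinuousLinearEquiv ℝ (cleB B hB).symm
  left_inv f := by
    ext x
    simp only [compCLMOfContinuousLinearEquiv_apply, Function.comp_apply]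
    rw [ContinuousLinearEquiv.apply_symm_apply]
  right_inv f := by
    ext x
    simp only [compCLMOfContinuousLinearEquiv_apply, Function.comp_apply]
    rw [ContinuousLinearEquiv.symm_apply_apply]

end BComp

section FT

def σS : 𝓢(Eu n, ℂ) →L[ℝ] 𝓢(P n, ℂ) := compCLMOfContinuousLinearEquiv ℝ eL
def τS : 𝓢(P n, ℂ) →L[ℝ] 𝓢(Eu n, ℂ) := compCLMOfContinuousLinearEquiv ℝ eL.symm

lemma τσ (f : 𝓢(Eu n, ℂ)) : τS (σS f) = f := by
  ext y
  simp only [σS, τS, compCLMOfContinuousLinearEquiv_apply, Function.comp_apply]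
  rw [ContinuousLinearEquiv.apply_symm_apply]

lemma στ (f : 𝓢(P n, ℂ)) : σS (τS f) = f := by
  ext x
  simp only [σS, τS, compCLMOfContinuousLinearEquiv_apply, Function.comp_apply]
  rw [ContinuousLinearEquiv.symm_apply_apply]

def eqFT : 𝓢(P n, ℂ) ≃ 𝓢(P n, ℂ) where
  toFun f := σS (fourierTransformCLE ℂ (𝓢(Eu n, ℂ)) (τS f))
  invFun f := σS ((fourierTransformCLE ℂ (𝓢(Eu n, ℂ))).symm (τS f))
  left_inv f := by
    dsimp only
    rw [τσ, ContinuousLinearEquiv.symm_apply_apply, στ]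
  right_inv f := by
    dsimp only
    rw [τσ, ContinuousLinearEquiv.apply_symm_apply, στ]

def eqFTinv : 𝓢(P n, ℂ) ≃ 𝓢(P n, ℂ) where
  toFun f := σS ((fourierTransformCLE ℂ (𝓢(Eu n, ℂ))).symm (τS f))
  invFun f := σS (fourierTransformCLE ℂ (𝓢(Eu n, ℂ)) (τS f))
  left_inv f := by
    dsimp only
    rw [τσ, ContinuousLinearEquiv.apply_symm_apply, στ]
  right_inv f := by
    dsimp only
    rw [τσ, ContinuousLinearEquiv.symm_apply_apply, στ]

end FT

end MabcProof


namespace MabcProof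

variable {n : ℕ}

lemma eqFT_eq (v : 𝓢(P n, ℂ)) : ⇑(eqFT v) = ft ⇑v := by
  funext x
  have h1 : eqFT v x = 𝓕 (⇑(τS v)) (eL x) := rfl
  have h4 : ft (⇑v) x = ∫ z : P n,
      Complex.exp (-(2 * (Real.pi : ℂ) * Complex.I) * ((z ⬝ᵥ x : ℝ) : ℂ)) * v z := rfl
  rw [h1, Real.fourier_eq', h4]
  rw [← integral_transfer (g := fun z : P n =>
    Complex.exp (-(2 * (Real.pi : ℂ) * Complex.I) * ((z ⬝ᵥ x : ℝ) : ℂ)) * v z)]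
  congr 1
  funext y
  have h2 : (τS v) y = v (eL.symm y) := rfl
  have h3 : (inner ℝ y (eL x) : ℝ) = (eL.symm y : P n) ⬝ᵥ x := by
    simp [PiLp.inner_apply, RCLike.inner_apply, dotProduct, eL_symm_apply, eL_apply, mul_comm]
  rw [h2, h3, smul_eq_mul]
  congr 1
  push_cast
  ring

lemma eqFTinv_eq (u : 𝓢(P n, ℂ)) : ⇑(eqFTinv u) =
    fun y : P n => ∫ η : P n,
      Complex.exp ((2 * (Real.pi : ℂ) * Complex.I) * ((y ⬝ᵥ η : ℝ) : ℂ)) * u η := by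
  funext y
  have h1 : eqFTinv u y = 𝓕⁻ (⇑(τS u)) (eL y) := by
    have : eqFTinv u y = ((fourierTransformCLE ℂ (𝓢(Eu n, ℂ))).symm (τS u)) (eL y) := rfl
    rw [this]; exact congrFun (SchwartzMap.fourierInv_coe (τS u)) (eL y)
  rw [h1, Real.fourierInv_eq']
  rw [← integral_transfer (g := fun η : P n =>
    Complex.exp ((2 * (Real.pi : ℂ) * Complex.I) * ((y ⬝ᵥ η : ℝ) : ℂ)) * u η)]
  congr 1
  funext z
  have h2 : (τS u) z = u (eL.symm z) := rfl
  have h3 : (inner ℝ z (eL y) : ℝ) = y ⬝ᵥ (eL.symm z : P n) := by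
    simp [PiLp.inner_apply, RCLike.inner_apply, dotProduct, eL_symm_apply, eL_apply, mul_comm]
  rw [h2, h3, smul_eq_mul]
  congr 1
  push_cast
  ring

lemma innerₗ_flip : (innerₗ (Eu n)).flip = innerₗ (Eu n) := by
  ext x y
  exact real_inner_comm x y

lemma fourier_conj {V : Type*} [NormedAddCommGroup V] [InnerProductSpace ℝ V]
    [FiniteDimensional ℝ V] [MeasurableSpace V] [BorelSpace V] (h : V → ℂ) (w : V) :
    𝓕 (fun x => (starRingEnd ℂ) (h x)) w = (starRingEnd ℂ) (𝓕⁻ h w) := by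
  rw [Real.fourier_eq', Real.fourierInv_eq', ← integral_conj]
  congr 1
  funext v
  rw [smul_eq_mul, smul_eq_mul, _root_.map_mul, ← Complex.exp_conj]
  congr 2
  simp [Complex.ext_iff]

lemma integrable_conj_of_schwartz (f : 𝓢(Eu n, ℂ)) :
    Integrable (fun x => (starRingEnd ℂ) (f x)) volume := by
  exact ((starL' ℝ : ℂ ≃L[ℝ] ℂ) : ℂ →L[ℝ] ℂ).integrable_comp (f.integrable (μ := volume))

lemma plancherel_E (f : 𝓢(Eu n, ℂ)) :
    ∫ x : Eu n, ‖𝓕 (⇑f) x‖ ^ 2 = ∫ x : Eu n, ‖f x‖ ^ 2 := by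
  set F1 := fourierTransformCLE ℂ (𝓢(Eu n, ℂ)) f with hF1def
  have hF1 : ⇑F1 = 𝓕 ⇑f := by rw [hF1def]; rfl
  have hinv : 𝓕⁻ (𝓕 ⇑f) = ⇑f :=
    Continuous.fourierInv_fourier_eq f.continuous f.integrable (hF1 ▸ F1.integrable)
  have key := VectorFourier.integral_bilin_fourierIntegral_eq_flip
    (μ := (volume : Measure (Eu n))) (ν := (volume : Measure (Eu n)))
    (L := innerₗ (Eu n)) (ContinuousLinearMap.mul ℂ ℂ) Real.continuous_fourierChar
    (by exact continuous_inner) f.integrable (integrable_conj_of_schwartz F1)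
  rw [innerₗ_flip] at key
  have e1 : ∀ x : Eu n, VectorFourier.fourierIntegral 𝐞 volume (innerₗ (Eu n))
      (fun x => (starRingEnd ℂ) (F1 x)) x = (starRingEnd ℂ) (f x) := by
    intro x
    have : VectorFourier.fourierIntegral 𝐞 volume (innerₗ (Eu n))
        (fun x => (starRingEnd ℂ) (F1 x)) x
        = 𝓕 (fun x => (starRingEnd ℂ) (F1 x)) x := rfl
    rw [this, fourier_conj, hF1, hinv]
  have e0 : ∀ x : Eu n, VectorFourier.fourierIntegral 𝐞 volume (innerₗ (Eu n)) (⇑f) x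
      = 𝓕 (⇑f) x := fun x => rfl
  simp only [ContinuousLinearMap.mul_apply'] at key
  have key2 : ∫ ξ : Eu n, 𝓕 (⇑f) ξ * (starRingEnd ℂ) (𝓕 (⇑f) ξ)
      = ∫ x : Eu n, f x * (starRingEnd ℂ) (f x) := by
    simp only [hF1] at key e1
    simp only [e1, e0] at key
    exact key
  have norm2 : ∀ (h : Eu n → ℂ) (x : Eu n), h x * (starRingEnd ℂ) (h x)
      = ((‖h x‖ ^ 2 : ℝ) : ℂ) := by
    intro h x
    rw [Complex.mul_conj]
    norm_cast
    rw [Complex.normSq_eq_norm_sq]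
  apply Complex.ofReal_injective
  have hco : ∀ (h : Eu n → ℂ), ∫ x : Eu n, ((‖h x‖ ^ 2 : ℝ) : ℂ)
      = ((∫ x : Eu n, ‖h x‖ ^ 2 : ℝ) : ℂ) := by
    intro h
    exact integral_ofReal (𝕜 := ℂ) (f := fun x => ‖h x‖ ^ 2)
  calc ((∫ x : Eu n, ‖𝓕 (⇑f) x‖ ^ 2 : ℝ) : ℂ)
      = ∫ x : Eu n, ((‖𝓕 (⇑f) x‖ ^ 2 : ℝ) : ℂ) := (hco (𝓕 ⇑f)).symm
    _ = ∫ ξ : Eu n, 𝓕 (⇑f) ξ * (starRingEnd ℂ) (𝓕 (⇑f) ξ) := by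
        congr 1; funext x; rw [norm2 (𝓕 ⇑f) x]
    _ = ∫ x : Eu n, f x * (starRingEnd ℂ) (f x) := key2
    _ = ∫ x : Eu n, ((‖f x‖ ^ 2 : ℝ) : ℂ) := by congr 1; funext x; rw [norm2 (⇑f) x]
    _ = ((∫ x : Eu n, ‖f x‖ ^ 2 : ℝ) : ℂ) := hco ⇑f


lemma plancherelInv_E (f : 𝓢(Eu n, ℂ)) :
    ∫ x : Eu n, ‖𝓕⁻ (⇑f) x‖ ^ 2 = ∫ x : Eu n, ‖f x‖ ^ 2 := by
  calc ∫ x : Eu n, ‖𝓕⁻ (⇑f) x‖ ^ 2 = ∫ x : Eu n, ‖𝓕 (⇑f) (-x)‖ ^ 2 := by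
        congr 1; funext x; rw [Real.fourierInv_eq_fourier_neg]
    _ = ∫ x : Eu n, ‖𝓕 (⇑f) x‖ ^ 2 := by
        exact integral_neg_eq_self (fun x => ‖𝓕 (⇑f) x‖ ^ 2) volume
    _ = ∫ x : Eu n, ‖f x‖ ^ 2 := plancherel_E f

lemma int_sq_σS (w : 𝓢(Eu n, ℂ)) : ∫ x : P n, ‖σS w x‖ ^ 2 = ∫ y : Eu n, ‖w y‖ ^ 2 := by
  rw [← integral_transfer (g := fun x : P n => ‖σS w x‖ ^ 2)]
  congr 1

lemma int_sq_τS (u : 𝓢(P n, ℂ)) : ∫ y : Eu n, ‖τS u y‖ ^ 2 = ∫ x : P n, ‖u x‖ ^ 2 :=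
  integral_transfer (g := fun x : P n => ‖u x‖ ^ 2)

lemma int_sq_eqFT (u : 𝓢(P n, ℂ)) : ∫ x : P n, ‖eqFT u x‖ ^ 2 = ∫ x : P n, ‖u x‖ ^ 2 := by
  have h0 : eqFT u = σS (fourierTransformCLE ℂ (𝓢(Eu n, ℂ)) (τS u)) := rfl
  rw [h0, int_sq_σS]
  have h1 : ∫ y : Eu n, ‖(fourierTransformCLE ℂ (𝓢(Eu n, ℂ)) (τS u)) y‖ ^ 2
      = ∫ y : Eu n, ‖𝓕 (⇑(τS u)) y‖ ^ 2 := rfl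
  rw [h1, plancherel_E (τS u), int_sq_τS]

lemma int_sq_eqFTinv (u : 𝓢(P n, ℂ)) :
    ∫ x : P n, ‖eqFTinv u x‖ ^ 2 = ∫ x : P n, ‖u x‖ ^ 2 := by
  have h0 : eqFTinv u = σS ((fourierTransformCLE ℂ (𝓢(Eu n, ℂ))).symm (τS u)) := rfl
  rw [h0, int_sq_σS]
  have h1 : ∫ y : Eu n, ‖((fourierTransformCLE ℂ (𝓢(Eu n, ℂ))).symm (τS u)) y‖ ^ 2
      = ∫ y : Eu n, ‖𝓕⁻ (⇑(τS u)) y‖ ^ 2 := by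
    congr 1; funext y; exact congrArg (‖·‖ ^ 2) (congrFun (SchwartzMap.fourierInv_coe (τS u)) y)
  rw [h1, plancherelInv_E (τS u), int_sq_τS]

lemma int_sq_compB (B : Matrix (Fin n) (Fin n) ℝ) (hB : IsUnit B.det) (u : 𝓢(P n, ℂ)) :
    ∫ x : P n, ‖u (B.mulVec x)‖ ^ 2 = |B.det|⁻¹ * ∫ x : P n, ‖u x‖ ^ 2 := by
  have hdet : B.det ≠ 0 := hB.ne_zero
  have hmeas : Measure.map (Matrix.toLin' B) volume
      = ENNReal.ofReal |B.det|⁻¹ • volume := by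
    have := Real.map_matrix_volume_pi_eq_smul_volume_pi hdet
    rwa [abs_inv] at this
  have hφ : AEMeasurable (Matrix.toLin' B) (volume : Measure (P n)) :=
    (LinearMap.continuous_of_finiteDimensional (Matrix.toLin' B)).measurable.aemeasurable
  have hg : AEStronglyMeasurable (fun y : P n => ‖u y‖ ^ 2)
      (Measure.map (Matrix.toLin' B) volume) :=
    ((u.continuous.norm.pow 2)).aestronglyMeasurable
  calc ∫ x : P n, ‖u (B.mulVec x)‖ ^ 2
      = ∫ x : P n, (fun y : P n => ‖u y‖ ^ 2) (Matrix.toLin' B x) := rfl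
    _ = ∫ y : P n, ‖u y‖ ^ 2 ∂(Measure.map (Matrix.toLin' B) volume) :=
        (integral_map hφ hg).symm
    _ = |B.det|⁻¹ * ∫ x : P n, ‖u x‖ ^ 2 := by
        rw [hmeas, integral_smul_measure, ENNReal.toReal_ofReal (by positivity)]
        rfl

variable (A B C : Matrix (Fin n) (Fin n) ℝ)

lemma sqrt_det_ne_zero (hB : IsUnit B.det) : ((Real.sqrt |B.det| : ℝ) : ℂ) ≠ 0 := by
  have hdet : B.det ≠ 0 := hB.ne_zero
  have : Real.sqrt |B.det| ≠ 0 := by positivity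
  exact_mod_cast this

def Ttot (hB : IsUnit B.det) : 𝓢(P n, ℂ) ≃ 𝓢(P n, ℂ) :=
  eqFT.trans ((eqMulG C).trans (eqFTinv.trans ((eqCompB B hB).trans ((eqMulG A).trans
    (eqScalar ((Real.sqrt |B.det| : ℝ) : ℂ) (sqrt_det_ne_zero B hB))))))

lemma Ttot_apply (hB : IsUnit B.det) (v : 𝓢(P n, ℂ)) :
    Ttot A B C hB v = ((Real.sqrt |B.det| : ℝ) : ℂ) •
      (mulG A ((eqCompB B hB) (eqFTinv ((eqMulG C) (eqFT v))))) := rfl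

lemma Ttot_eq (hB : IsUnit B.det) (v : 𝓢(P n, ℂ)) :
    ⇑(Ttot A B C hB v) = Mabc A B C ⇑v := by
  funext x
  set c : ℂ := ((Real.sqrt |B.det| : ℝ) : ℂ)
  set u2 : 𝓢(P n, ℂ) := (eqMulG C) (eqFT v) with hu2
  set u3 : 𝓢(P n, ℂ) := eqFTinv u2 with hu3
  have h5 : Ttot A B C hB v x = c * (u3 (B.mulVec x) * gauss A x) := rfl
  have hu3' : u3 (B.mulVec x) = ∫ η : P n,
      Complex.exp ((2 * (Real.pi : ℂ) * Complex.I) * ((B.mulVec x ⬝ᵥ η : ℝ) : ℂ)) * u2 η := by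
    rw [hu3]
    rw [congrFun (eqFTinv_eq u2) (B.mulVec x)]
  have hu2' : ∀ η, u2 η = ft (⇑v) η * gauss C η := by
    intro η
    rw [hu2]
    show (eqFT v) η * gauss C η = _
    rw [congrFun (eqFT_eq v) η]
  have hM : Mabc A B C (⇑v) x = c * ∫ η : P n,
      Complex.exp (Complex.I * (Real.pi : ℂ) *
        ((A.mulVec x ⬝ᵥ x + 2 * (B.mulVec x ⬝ᵥ η) + C.mulVec η ⬝ᵥ η : ℝ) : ℂ)) *
        ft (⇑v) η := rfl
  rw [h5, hu3', hM]
  congr 1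
  rw [← integral_mul_const]
  refine integral_congr_ae (μ := volume) (Filter.Eventually.of_forall fun η : P n => ?_)
  dsimp only
  rw [hu2' η, gauss, gauss]
  have hexp : Complex.I * (Real.pi : ℂ) *
      ((A.mulVec x ⬝ᵥ x + 2 * (B.mulVec x ⬝ᵥ η) + C.mulVec η ⬝ᵥ η : ℝ) : ℂ)
      = (2 * (Real.pi : ℂ) * Complex.I) * ((B.mulVec x ⬝ᵥ η : ℝ) : ℂ)
        + (Complex.I * (Real.pi : ℂ) * ((C.mulVec η ⬝ᵥ η : ℝ) : ℂ)
        + Complex.I * (Real.pi : ℂ) * ((A.mulVec x ⬝ᵥ x : ℝ) : ℂ)) := by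
    push_cast
    ring
  rw [hexp, Complex.exp_add, Complex.exp_add]
  ring

lemma Ttot_norm (hB : IsUnit B.det) (v : 𝓢(P n, ℂ)) :
    ∫ x : P n, ‖Ttot A B C hB v x‖ ^ 2 = ∫ x : P n, ‖v x‖ ^ 2 := by
  have hdet : B.det ≠ 0 := hB.ne_zero
  have habs : |B.det| ≠ 0 := abs_ne_zero.mpr hdet
  set u2 : 𝓢(P n, ℂ) := (eqMulG C) (eqFT v) with hu2
  set u3 : 𝓢(P n, ℂ) := eqFTinv u2 with hu3
  have hnorm : ∀ x : P n, ‖Ttot A B C hB v x‖ ^ 2 = |B.det| * ‖u3 (B.mulVec x)‖ ^ 2 := by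
    intro x
    have h5 : Ttot A B C hB v x
        = ((Real.sqrt |B.det| : ℝ) : ℂ) * (u3 (B.mulVec x) * gauss A x) := rfl
    rw [h5, norm_mul, norm_mul, gauss_norm, mul_one, mul_pow, Complex.norm_real,
      Real.norm_eq_abs, _root_.abs_of_nonneg (Real.sqrt_nonneg _), Real.sq_sqrt (abs_nonneg _)]
  calc ∫ x : P n, ‖Ttot A B C hB v x‖ ^ 2
      = ∫ x : P n, |B.det| * ‖u3 (B.mulVec x)‖ ^ 2 := by congr 1; funext x; rw [hnorm x]
    _ = |B.det| * ∫ x : P n, ‖u3 (B.mulVec x)‖ ^ 2 := integral_const_mul _ _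
    _ = |B.det| * (|B.det|⁻¹ * ∫ x : P n, ‖u3 x‖ ^ 2) := by rw [int_sq_compB B hB u3]
    _ = ∫ x : P n, ‖u3 x‖ ^ 2 := by rw [← mul_assoc, mul_inv_cancel₀ habs, one_mul]
    _ = ∫ x : P n, ‖u2 x‖ ^ 2 := int_sq_eqFTinv u2
    _ = ∫ x : P n, ‖(eqFT v) x‖ ^ 2 := by
        congr 1; funext x
        have : u2 x = (eqFT v) x * gauss C x := rfl
        rw [this, norm_mul, gauss_norm, mul_one]
    _ = ∫ x : P n, ‖v x‖ ^ 2 := int_sq_eqFT v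

end MabcProof

/-- `M_{A,B,C}` maps the Schwartz space bijectively onto itself and preserves the
`L²` norm (hence extends to a unitary operator on `L²(ℝⁿ)`). -/
theorem Mabc_unitary_schwartz_automorphism {n : ℕ} (hn : 1 ≤ n)
    (A B C : Matrix (Fin n) (Fin n) ℝ)
    (hA : A.IsSymm) (hC : C.IsSymm) (hB : IsUnit B.det) :
    (∀ v : SchwartzMap (Fin n → ℝ) ℂ, ∃ w : SchwartzMap (Fin n → ℝ) ℂ,
        ⇑w = Mabc A B C ⇑v) ∧
    (∀ v : SchwartzMap (Fin n → ℝ) ℂ,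
        (∫ x, ‖Mabc A B C (⇑v) x‖ ^ 2) = ∫ x, ‖v x‖ ^ 2) ∧
    (∀ v₁ v₂ : SchwartzMap (Fin n → ℝ) ℂ,
        Mabc A B C ⇑v₁ = Mabc A B C ⇑v₂ → v₁ = v₂) ∧
    (∀ w : SchwartzMap (Fin n → ℝ) ℂ, ∃ v : SchwartzMap (Fin n → ℝ) ℂ,
        Mabc A B C ⇑v = ⇑w) := by
  have key : ∀ v : 𝓢(Fin n → ℝ, ℂ), ⇑(MabcProof.Ttot A B C hB v) = Mabc A B C ⇑v :=
    MabcProof.Ttot_eq A B C hB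
  refine ⟨fun v => ⟨MabcProof.Ttot A B C hB v, key v⟩, ?_, ?_, ?_⟩
  · intro v
    rw [← key v]
    exact MabcProof.Ttot_norm A B C hB v
  · intro v₁ v₂ h
    have h2 : ⇑(MabcProof.Ttot A B C hB v₁) = ⇑(MabcProof.Ttot A B C hB v₂) := by
      rw [key v₁, key v₂, h]
    exact (MabcProof.Ttot A B C hB).injective (DFunLike.coe_injective h2)
  · intro w
    refine ⟨(MabcProof.Ttot A B C hB).symm w, ?_⟩
    rw [← key, Equiv.apply_symm_apply]

end
end
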